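/- Let W be a finite-dimensional complex representation of a finite group G = Θ ⋊ H with Θ finite abelian, and let B ⊆ Θ be an H-stable subgroup. Suppose that no irreducible constituent of W has trivial B-action, i.e., W^B = 0. If moreover every character χ of Θ that is nontrivial on B has trivial H-stabilizer, then dim W^H ≤ |H|^{-1} dim W. -/

import Mathlib

/-!
For `h ≠ 1` the elements `θ · (h θ)⁻¹` form the range `K` of a homomorphism `Θ → Θ`, and a
character of `Θ` is trivial on `K` exactly when it is fixed by `h`. By the stabilizer hypothesis,
such characters are trivial on `B`, so `B ≤ K` by duality of finite abelian groups, whence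
`W^K ⊆ W^B = 0` and `∑_{k ∈ K} ρ k = 0`. Every `k · h` with `k ∈ K` is a commutator times `h`,
hence conjugate to `h`, so taking traces of `(∑_{k ∈ K} ρ k) ρ h = 0` gives `|K| tr (ρ h) = 0`.
The character of `W|_H` is thus supported at `1`, and averaging it gives
`|H| dim W^H = dim W`.
-/

open Module
open scoped commutatorElement

theorem isConj_commutatorElement_mul {G : Type*} [Group G] (a b : G) : IsConj b (⁅a, b⁆ * b) :=
  isConj_iff.mpr ⟨a, by simp [commutatorElement_def]⟩

theorem CommGroup.exists_le_ker_apply_ne_one {Θ : Type*} [CommGroup Θ] [Finite Θ]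
    {S : Subgroup Θ} {b : Θ} (hb : b ∉ S) : ∃ χ : Θ →* ℂˣ, S ≤ χ.ker ∧ χ b ≠ 1 := by
  have hb' : (QuotientGroup.mk' S b) ≠ 1 := by simpa [QuotientGroup.eq_one_iff] using hb
  obtain ⟨χ, hχ⟩ := CommGroup.exists_apply_ne_one_of_hasEnoughRootsOfUnity (Θ ⧸ S) ℂ hb'
  refine ⟨χ.comp (QuotientGroup.mk' S), fun s hs => ?_, hχ⟩
  simp [MonoidHom.mem_ker, (QuotientGroup.eq_one_iff s).mpr hs]

namespace SemidirectProduct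

variable {N G : Type*} [CommGroup N] [Group G] (φ : G →* MulAut N)

def commutatorHom (g : G) : N →* N where
  toFun n := n * (φ g n)⁻¹
  map_one' := by simp
  map_mul' a b := by simp only [map_mul, mul_inv_rev]; ac_rfl

theorem inl_commutatorHom (g : G) (n : N) :
    inl (commutatorHom φ g n) = ⁅(inl n : N ⋊[φ] G), (inr g : N ⋊[φ] G)⁆ := by
  ext <;> simp [commutatorHom, commutatorElement_def]

theorem range_commutatorHom_le_ker_iff {M : Type*} [CommGroup M] (g : G) (χ : N →* M) :
    (commutatorHom φ g).range ≤ χ.ker ↔ ∀ n, χ (φ g n) = χ n := by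
  simp only [MonoidHom.range_le_ker_iff, MonoidHom.ext_iff, MonoidHom.comp_apply,
    MonoidHom.one_apply, commutatorHom, MonoidHom.coe_mk, OneHom.coe_mk, map_mul, map_inv,
    mul_inv_eq_one]
  exact forall_congr' fun _ => eq_comm

end SemidirectProduct

namespace Representation

section CommRing

variable {k G V : Type*} [CommRing k] [Group G] [AddCommGroup V] [Module k V]
  (ρ : Representation k G V)

theorem invariants_comp_subtype_le_of_le {S T : Subgroup G} (hST : S ≤ T) :
    invariants (ρ.comp T.subtype) ≤ invariants (ρ.comp S.subtype) :=
  fun _ hv s => hv ⟨s, hST s.2⟩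

theorem sum_eq_zero_of_invariants_eq_bot [Fintype G] (h : invariants ρ = ⊥) :
    ∑ g, ρ g = 0 := by
  ext v
  have hv : (∑ g, ρ g) v ∈ invariants ρ := fun g => by
    simp only [LinearMap.sum_apply, map_sum, ← Module.End.mul_apply, ← map_mul]
    exact Fintype.sum_equiv (Equiv.mulLeft g) _ _ fun _ => rfl
  simpa [h] using hv

end CommRing

variable {k G V : Type*} [Field k] [Group G] [AddCommGroup V] [Module k V]
  (ρ : Representation k G V)

theorem character_eq_zero_of_isConj_mul [CharZero k] {K : Type*} [Group K] [Finite K]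
    (ι : K →* G) (hK : invariants (ρ.comp ι) = ⊥) (g : G)
    (hg : ∀ x, IsConj g (ι x * g)) : ρ.character g = 0 := by
  have := Fintype.ofFinite K
  have hconst (x : K) : ρ.character (ι x * g) = ρ.character g := by
    obtain ⟨c, hc⟩ := isConj_iff.mp (hg x)
    rw [← hc, char_conj]
  have hsum : (Fintype.card K : k) * ρ.character g = 0 := calc
    _ = ∑ x, ρ.character (ι x * g) := by simp [hconst]
    _ = LinearMap.trace k V ((∑ x, ρ.comp ι x) * ρ g) := by
      simp [character, Finset.sum_mul, map_sum]
    _ = 0 := by rw [sum_eq_zero_of_invariants_eq_bot _ hK, zero_mul, map_zero]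
  exact (mul_eq_zero.mp hsum).resolve_left (Nat.cast_ne_zero.mpr Fintype.card_ne_zero)

theorem card_mul_finrank_invariants_of_character_eq_zero [Fintype G] [CharZero k]
    [FiniteDimensional k V] (h : ∀ g ≠ 1, ρ.character g = 0) :
    Fintype.card G * finrank k (invariants ρ) = finrank k V := by
  have hcard : (Nat.card G : k) ≠ 0 := Nat.cast_ne_zero.mpr Nat.card_pos.ne'
  have : Invertible (Nat.card G : k) := invertibleOfNonzero hcard
  have hfin := ρ.card_inv_mul_sum_char_eq_finrank
  rw [Finset.sum_eq_single 1 (fun g _ hg => h g hg) (by simp), char_one,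
    inv_mul_eq_iff_eq_mul₀ hcard, Nat.card_eq_fintype_card] at hfin
  exact_mod_cast hfin.symm

end Representation

theorem dim_H_invariants_le_general {Θ H : Type} [CommGroup Θ] [Fintype Θ] [Group H] [Fintype H]
    (φ : H →* MulAut Θ)
    {V : Type} [AddCommGroup V] [Module ℂ V] [FiniteDimensional ℂ V]
    (ρ : Representation ℂ (Θ ⋊[φ] H) V)
    (B : Subgroup Θ)
    (hWB : Representation.invariants
        (ρ.comp (SemidirectProduct.inl.comp B.subtype) : Representation ℂ ↥B V) = ⊥)
    (hstab : ∀ χ : Θ →* ℂˣ, (∃ b : ↥B, χ ↑b ≠ 1) →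
      ∀ h : H, (∀ θ : Θ, χ (φ h θ) = χ θ) → h = 1) :
    Fintype.card H *
        finrank ℂ (Representation.invariants
          (ρ.comp SemidirectProduct.inr : Representation ℂ H V)) ≤
      finrank ℂ V := by
  refine (Representation.card_mul_finrank_invariants_of_character_eq_zero _ fun h hh => ?_).le
  set K := (SemidirectProduct.commutatorHom φ h).range
  have hBK : B ≤ K := fun b hb => by
    by_contra hbK
    obtain ⟨χ, hKχ, hχb⟩ := CommGroup.exists_le_ker_apply_ne_one hbK
    exact hh (hstab χ ⟨⟨b, hb⟩, hχb⟩ h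
      ((SemidirectProduct.range_commutatorHom_le_ker_iff φ h χ).mp hKχ))
  have hWK : Representation.invariants ((ρ.comp SemidirectProduct.inl).comp K.subtype) = ⊥ :=
    eq_bot_iff.mpr (hWB ▸ Representation.invariants_comp_subtype_le_of_le _ hBK)
  refine ρ.character_eq_zero_of_isConj_mul (SemidirectProduct.inl.comp K.subtype) hWK
    (SemidirectProduct.inr h) ?_
  rintro ⟨_, n, rfl⟩
  simpa [SemidirectProduct.inl_commutatorHom] using
    isConj_commutatorElement_mul (SemidirectProduct.inl n : Θ ⋊[φ] H) (SemidirectProduct.inr h)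

/-- Let `W` be a finite-dimensional complex representation of
`G = Θ ⋊ H` with `Θ` finite abelian, and `B ⊆ Θ` an `H`-stable subgroup.  Suppose
`W^B = 0` (no irreducible constituent of `W` has trivial `B`-action), and that every
character `χ : Θ → ℂˣ` which is nontrivial on `B` has trivial `H`-stabilizer.  Then
`dim W^H ≤ |H|⁻¹ dim W`. -/
theorem dim_H_invariants_le {Θ H : Type} [CommGroup Θ] [Fintype Θ] [Group H] [Fintype H]
    (φ : H →* MulAut Θ)
    {V : Type} [AddCommGroup V] [Module ℂ V] [FiniteDimensional ℂ V]
    (ρ : Representation ℂ (Θ ⋊[φ] H) V)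
    (B : Subgroup Θ) (hB : ∀ (h : H), ∀ b ∈ B, φ h b ∈ B)
    (hWB : Representation.invariants
        (ρ.comp (SemidirectProduct.inl.comp B.subtype) : Representation ℂ ↥B V) = ⊥)
    (hstab : ∀ χ : Θ →* ℂˣ, (∃ b : ↥B, χ ↑b ≠ 1) →
      ∀ h : H, (∀ θ : Θ, χ (φ h θ) = χ θ) → h = 1) :
    Fintype.card H *
        finrank ℂ (Representation.invariants
          (ρ.comp SemidirectProduct.inr : Representation ℂ H V)) ≤
      finrank ℂ V :=
  dim_H_invariants_le_general φ ρ B hWB hstab
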